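/- Let L : H₄ → ℝ be a linear functional with L(f) ≥ 0 for all f ∈ P, and set F := {f ∈ P : L(f) = 0} (an exposed face of P). Then {q ∈ H₂ : L(q·r) = 0 for all r ∈ H₂} = J_F = {q ∈ H₂ : q² ∈ F}; that is, the kernel of the positive semidefinite bilinear form B_L(f,g) := L(fg) on H₂ equals J_F. -/
import Mathlib


open MvPolynomial

noncomputable section

/-- The space of ternary (3-variable) real polynomials. `H d` corresponds to the
homogeneous polynomials of degree `d` via the predicate `IsHomogeneous`. -/
abbrev MvP : Type := MvPolynomial (Fin 3) ℝ

/-- The cone `P` of nonnegative ternary quartics. -/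
def Pcone : Set MvP :=
  {f | f.IsHomogeneous 4 ∧ ∀ a : Fin 3 → ℝ, 0 ≤ eval a f}

/-- `F` is a face of the cone `P`. -/
def IsFace (F : Set MvP) : Prop :=
  F ⊆ Pcone ∧
  (∀ a ∈ F, ∀ b ∈ F, a + b ∈ F) ∧
  (∀ c : ℝ, 0 ≤ c → ∀ a ∈ F, c • a ∈ F) ∧
  (∀ a ∈ Pcone, ∀ b ∈ Pcone, a + b ∈ F → a ∈ F ∧ b ∈ F)

/-- `J_F = {q ∈ H₂ : q² ∈ F}`. -/
def Jset (F : Set MvP) : Set MvP :=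
  {q | q.IsHomogeneous 2 ∧ q ^ 2 ∈ F}

/-- for a linear functional `L` nonnegative on `P` defining the exposed face
`F = {f ∈ P : L f = 0}`, the kernel of the bilinear form `B_L(f,g) = L(fg)` on `H₂`
equals `J_F`. -/
theorem stmt_16 (L : MvP →ₗ[ℝ] ℝ) (hL : ∀ f ∈ Pcone, 0 ≤ L f) :
    {q : MvP | q.IsHomogeneous 2 ∧ ∀ r : MvP, r.IsHomogeneous 2 → L (q * r) = 0} =
      Jset {f ∈ Pcone | L f = 0} := by
  have sq_mem : ∀ f : MvP, f.IsHomogeneous 2 → f ^ 2 ∈ Pcone := by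
    intro f hf
    refine ⟨by simpa using hf.pow 2, fun a => ?_⟩
    rw [map_pow]
    exact sq_nonneg _
  ext q
  simp only [Set.mem_setOf_eq, Jset, Set.mem_sep_iff]
  constructor
  · rintro ⟨hq, h⟩
    refine ⟨hq, sq_mem q hq, ?_⟩
    have := h q hq
    simpa [sq] using this
  · rintro ⟨hq, hmem, hzero⟩
    refine ⟨hq, fun r hr => ?_⟩
    -- Cauchy–Schwarz style argument
    have key : ∀ t : ℝ, 0 ≤ L (r ^ 2) * t ^ 2 + (2 * L (q * r)) * t := by
      intro t
      have htr : (t • r).IsHomogeneous 2 := by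
        rw [smul_eq_C_mul]
        simpa using (isHomogeneous_C (Fin 3) t).mul hr
      have hmem' : (q + t • r) ^ 2 ∈ Pcone := sq_mem _ (hq.add htr)
      have h0 := hL _ hmem'
      have expand : (q + t • r) ^ 2 = q ^ 2 + (2 * t) • (q * r) + (t ^ 2) • r ^ 2 := by
        rw [smul_eq_C_mul, smul_eq_C_mul, smul_eq_C_mul, map_mul, map_pow, map_ofNat]
        ring
      rw [expand] at h0
      simp only [map_add, map_smul, smul_eq_mul, hzero, zero_add] at h0
      nlinarith [h0]
    have ha : 0 ≤ L (r ^ 2) := hL _ (sq_mem r hr)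
    by_contra hb
    set a := L (r ^ 2)
    set b := 2 * L (q * r) with hbdef
    have hbne : b ≠ 0 := by
      simp only [hbdef]
      intro h
      apply hb
      linarith [h]
    have := key (-b / (a + 1))
    have hap : 0 < a + 1 := by linarith
    have hb2 : 0 < b ^ 2 := by positivity
    rw [div_pow, neg_pow] at this
    have h1 : a * ((-1) ^ 2 * b ^ 2 / (a + 1) ^ 2) + b * (-b / (a + 1)) =
        -(b ^ 2) / (a + 1) ^ 2 := by
      field_simp
      ring
    rw [h1, neg_div] at this
    have h2 : 0 < b ^ 2 / (a + 1) ^ 2 := by positivity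
    linarith
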